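/- arXiv:2211.07996 — 2 statements merged into one kernel-verified Lean document; each statement's English description precedes it below -/
import Mathlib

section
/- Fix integers r, s ≥ 1 and t ≥ 2, and let \widetilde{P}^t_{r,s} denote the number of t-cores λ ∈ Par_{r,s} with λ_1 = s and λ_r ≥ 1 (i.e., with largest part exactly s and exactly r nonzero parts). If r + s ≡ 1 (mod t), then \widetilde{P}^t_{r,s} = 0. Otherwise, letting j be the unique element of {1, ..., t−1} with j ≡ r + s − 1 (mod t), \widetilde{P}^t_{r,s} equals the coefficient of q^{r − n_j} in the polynomial ∏_{i=1, i≠j}^{t−1} (1 + q + q^2 + ... + q^{n_i}). -/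
open Finset

/-- Partitions in the `r × s` rectangle: weakly decreasing `r`-tuples with parts at most `s`. -/
def IsRectPartition (r s : ℕ) (lam : Fin r → ℕ) : Prop :=
  (∀ i j : Fin r, i ≤ j → lam j ≤ lam i) ∧ ∀ i, lam i ≤ s

/-- The beta-set `β(λ) = {λ_i + r − i : 1 ≤ i ≤ r}` (with 0-indexed `i`). -/
def betaSet (r : ℕ) (lam : Fin r → ℕ) : Finset ℕ :=
  Finset.image (fun i : Fin r => lam i + (r - 1 - (i : ℕ))) Finset.univ

/-- `λ` is a `t`-core: for every `b ∈ β(λ)` with `b ≥ t`, also `b − t ∈ β(λ)`. -/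
def IsTCore (r t : ℕ) (lam : Fin r → ℕ) : Prop :=
  ∀ b ∈ betaSet r lam, t ≤ b → b - t ∈ betaSet r lam

/-- `n_i = ⌊(r+s+t−1−i)/t⌋`. -/
def nres (r s t i : ℕ) : ℕ := (r + s + t - 1 - i) / t

/-- `a_i(λ) = #{b ∈ β(λ) : b ≡ i (mod t)}`. -/
def aCount (r t : ℕ) (lam : Fin r → ℕ) (i : ℕ) : ℕ :=
  ((betaSet r lam).filter fun b => b % t = i).card

/-- The justification `J(λ)`: in each residue class `i` mod `t`, the `a_i(λ)` smallest
nonnegative integers congruent to `i`. -/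
def justification (r t : ℕ) (lam : Fin r → ℕ) : Finset ℕ :=
  (Finset.range t).biUnion fun i =>
    (Finset.range (aCount r t lam i)).image fun m => i + m * t

/-- The size of the `t`-core of `λ`: `Σ_{b ∈ J(λ)} b − r(r−1)/2`. -/
def coreSize (r t : ℕ) (lam : Fin r → ℕ) : ℕ :=
  (∑ b ∈ justification r t lam, b) - r * (r - 1) / 2

/-!
A partition in the `r × s` box is determined by its beta-set, an arbitrary `r`-subset of
`{0, …, r + s - 1}`, and it is a `t`-core exactly when on every runner `i` of the `t`-abacus its
beads fill the lowest positions `i, i + t, …, i + (a_i - 1) t`. So `t`-cores correspond to vectors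
`(a_i)_{i < t}` with `a_i ≤ n_i` and `∑ a_i = r`. Largest part `s` means that the bead
`r + s - 1` is present, i.e. runner `j` is full, `a_j = n_j`; having no zero part means that `0` is
absent, i.e. `a_0 = 0`. For `j = 0` these conflict; otherwise the `a_i` with `i ≠ 0, j` range freely
over `[0, n_i]` subject to `∑ a_i = r - n_j`, which is what the coefficient counts.
-/

theorem LaurentPolynomial.coeff_prod_sum_T {ι : Type*} [DecidableEq ι] (S : Finset ι)
    (A : ι → Finset ℕ) (k : ℤ) :
    (∏ i ∈ S, ∑ m ∈ A i, (LaurentPolynomial.T m : LaurentPolynomial ℤ)).coeff k =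
      #{a ∈ S.pi A | ∑ x ∈ S.attach, (a x.1 x.2 : ℤ) = k} := by
  simp only [prod_sum, LaurentPolynomial.T, AddMonoidAlgebra.prod_single, prod_const_one,
    AddMonoidAlgebra.coeff_sum, Finset.sum_apply', AddMonoidAlgebra.coeff_single,
    Finsupp.single_apply, sum_boole]

theorem Nat.sub_one_mod_eq_zero_iff {n t : ℕ} (hn : 0 < n) (ht : 2 ≤ t) :
    (n - 1) % t = 0 ↔ n % t = 1 := by
  rw [← Nat.dvd_iff_mod_eq_zero, ← Nat.modEq_iff_dvd' hn, Nat.ModEq, Nat.mod_eq_of_lt ht, eq_comm]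

theorem mem_Icc_one_erase_iff {t j i : ℕ} :
    i ∈ (Icc 1 (t - 1)).erase j ↔ i ≠ j ∧ i ≠ 0 ∧ i < t := by
  simp only [mem_erase, mem_Icc]
  omega

theorem sum_range_eq_add_add_sum_erase {t j : ℕ} (hj0 : j ≠ 0) (hjt : j < t) (a : ℕ → ℕ) :
    ∑ i ∈ range t, a i = a 0 + (a j + ∑ i ∈ (Icc 1 (t - 1)).erase j, a i) := by
  have hj : j ∈ Icc 1 (t - 1) := mem_Icc.mpr ⟨by omega, by omega⟩
  have h0 : 0 ∉ insert j ((Icc 1 (t - 1)).erase j) := by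
    rw [insert_erase hj]; simp
  have hsplit : range t = insert 0 (insert j ((Icc 1 (t - 1)).erase j)) := by
    rw [insert_erase hj]; ext; simp only [mem_range, mem_insert, mem_Icc]; omega
  rw [hsplit, sum_insert h0, sum_insert (notMem_erase j _)]

theorem StrictMono.val_sub_le_sub {n : ℕ} {f : Fin n → ℕ} (hf : StrictMono f) (a b : Fin n) :
    (b : ℕ) - a ≤ f b - f a := by
  have h := card_le_card (show (Icc a b).image f ⊆ Icc (f a) (f b) from fun x hx => by
    obtain ⟨c, hc, rfl⟩ := mem_image.mp hx
    exact mem_Icc.mpr ⟨hf.monotone (mem_Icc.mp hc).1, hf.monotone (mem_Icc.mp hc).2⟩)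
  rw [card_image_of_injective _ hf.injective, Fin.card_Icc, Nat.card_Icc] at h
  omega

def abacus (t : ℕ) (a : ℕ → ℕ) : Finset ℕ :=
  (range t).biUnion fun i => (range (a i)).image fun m => i + m * t

section Abacus
variable {t : ℕ} {a : ℕ → ℕ}

theorem mem_abacus (ht : 0 < t) {b : ℕ} : b ∈ abacus t a ↔ b / t < a (b % t) := by
  simp only [abacus, mem_biUnion, mem_range, mem_image]
  constructor
  · rintro ⟨i, hi, m, hm, rfl⟩
    rwa [Nat.add_mul_div_right _ _ ht, Nat.div_eq_of_lt hi, zero_add, Nat.add_mul_mod_self_right,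
      Nat.mod_eq_of_lt hi]
  · exact fun h => ⟨b % t, Nat.mod_lt b ht, b / t, h, by rw [mul_comm, Nat.mod_add_div]⟩

theorem add_mul_mem_abacus_iff (ht : 0 < t) {i m : ℕ} (hi : i < t) :
    i + m * t ∈ abacus t a ↔ m < a i := by
  rw [mem_abacus ht, Nat.add_mul_div_right _ _ ht, Nat.div_eq_of_lt hi, zero_add,
    Nat.add_mul_mod_self_right, Nat.mod_eq_of_lt hi]

theorem abacus_congr {a' : ℕ → ℕ} (h : ∀ i < t, a i = a' i) : abacus t a = abacus t a' :=
  biUnion_congr rfl fun i hi => by rw [h i (mem_range.mp hi)]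

theorem card_filter_mod_abacus (ht : 0 < t) {i : ℕ} (hi : i < t) :
    #{b ∈ abacus t a | b % t = i} = a i := by
  have : {b ∈ abacus t a | b % t = i} = (range (a i)).image fun m => i + m * t := by
    ext b
    simp only [mem_filter, mem_abacus ht, mem_image, mem_range]
    constructor
    · rintro ⟨hb, rfl⟩
      exact ⟨b / t, hb, by rw [mul_comm, Nat.mod_add_div]⟩
    · rintro ⟨m, hm, rfl⟩
      rw [← mem_abacus ht, add_mul_mem_abacus_iff ht hi, Nat.add_mul_mod_self_right,
        Nat.mod_eq_of_lt hi]
      exact ⟨hm, rfl⟩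
  rw [this, card_image_of_injective _ fun m m' h => by simpa [ht.ne'] using h, card_range]

theorem card_abacus (ht : 0 < t) : #(abacus t a) = ∑ i ∈ range t, a i := by
  rw [card_eq_sum_card_fiberwise fun b _ => mem_range.mpr (Nat.mod_lt b ht)]
  exact sum_congr rfl fun i hi => card_filter_mod_abacus ht (mem_range.mp hi)

theorem sub_mem_abacus (ht : 0 < t) {b : ℕ} (hb : b ∈ abacus t a) (htb : t ≤ b) :
    b - t ∈ abacus t a := by
  obtain ⟨c, rfl⟩ := Nat.exists_eq_add_of_le' htb
  rw [mem_abacus ht, Nat.add_mod_right, Nat.add_div_right _ ht] at hb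
  rw [Nat.add_sub_cancel, mem_abacus ht]
  omega

theorem abacus_subset_range_iff (ht : 0 < t) {N : ℕ} :
    abacus t a ⊆ range N ↔ ∀ i < t, a i ≤ (N + t - 1 - i) / t := by
  simp_rw [Nat.le_div_iff_mul_le ht]
  constructor
  · intro h i hi
    rcases Nat.eq_zero_or_pos (a i) with h0 | h0
    · simp [h0]
    have hlt := mem_range.mp (h ((add_mul_mem_abacus_iff ht hi).mpr (Nat.sub_lt h0 one_pos)))
    have : a i * t = (a i - 1) * t + t := by
      rw [← Nat.succ_mul, Nat.succ_eq_add_one, Nat.sub_add_cancel h0]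
    omega
  · intro h b hb
    rw [mem_abacus ht] at hb
    have hb' := h _ (Nat.mod_lt b ht)
    have hmul : (b / t + 1) * t ≤ a (b % t) * t := Nat.mul_le_mul_right t hb
    have hdm := Nat.div_add_mod b t
    have : (b / t + 1) * t = t * (b / t) + t := by ring
    rw [mem_range]
    omega

theorem eq_abacus_of_sub_mem (ht : 0 < t) {B : Finset ℕ} (hB : ∀ b ∈ B, t ≤ b → b - t ∈ B) :
    B = abacus t fun i => #{b ∈ B | b % t = i} := by
  have sub_mul_mem : ∀ b ∈ B, ∀ k, k * t ≤ b → b - k * t ∈ B := by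
    intro b hb k
    induction k with
    | zero => simpa using hb
    | succ k ih =>
      intro hk
      rw [Nat.succ_mul] at hk ⊢
      rw [← Nat.sub_sub]
      exact hB _ (ih (by omega)) (by omega)
  -- `b ∈ B` drags `b - t, b - 2t, …` into `B`, so runner `b % t` carries more than `b / t` beads.
  refine eq_of_subset_of_card_le (fun b hb => ?_) ?_
  · rw [mem_abacus ht, ← Nat.add_one_le_iff, ← card_range (b / t + 1)]
    refine card_le_card_of_injOn (fun m => b % t + m * t) (fun m hm => ?_) ?_
    · obtain ⟨k, hk⟩ := Nat.exists_eq_add_of_le (Nat.lt_succ_iff.mp (mem_range.mp hm))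
      have hdm := Nat.mod_add_div b t
      have : t * (b / t) = m * t + k * t := by rw [hk]; ring
      have hmk : b % t + m * t = b - k * t := by omega
      simp only [coe_filter, Set.mem_ofPred_eq, hmk]
      exact ⟨sub_mul_mem b hb k (by omega), by rw [← hmk]; simp⟩
    · intro m _ m' _ h
      simpa [ht.ne'] using h
  · rw [card_abacus ht, card_eq_sum_card_fiberwise fun b _ => mem_range.mpr (Nat.mod_lt b ht)]

end Abacus

section BetaSet
variable {r s : ℕ} {lam : Fin r → ℕ}

theorem strictAnti_beta (h : Antitone lam) : StrictAnti fun i : Fin r => lam i + (r - 1 - i) := by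
  intro i j hij
  have := h hij.le
  have := j.isLt
  have : (i : ℕ) < j := hij
  show lam j + (r - 1 - j) < lam i + (r - 1 - i)
  omega

theorem card_betaSet (h : Antitone lam) : #(betaSet r lam) = r := by
  rw [betaSet, card_image_of_injective _ (strictAnti_beta h).injective, card_univ, Fintype.card_fin]

theorem betaSet_subset_range (hp : IsRectPartition r s lam) : betaSet r lam ⊆ range (r + s) := by
  intro b hb
  obtain ⟨i, -, rfl⟩ := mem_image.mp hb
  have := hp.2 i
  have := i.isLt
  exact mem_range.mpr (by omega)

theorem eq_of_betaSet_eq {lam' : Fin r → ℕ} (h : Antitone lam) (h' : Antitone lam')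
    (heq : betaSet r lam = betaSet r lam') : lam = lam' := by
  have hrange := (strictAnti_beta h).range_inj (strictAnti_beta h')
  rw [← Set.image_univ, ← Set.image_univ, ← coe_univ, ← coe_image, ← coe_image] at hrange
  funext i
  have := congrFun (hrange.mp (congrArg _ heq)) i
  omega

theorem exists_betaSet_eq {B : Finset ℕ} (hB : B ⊆ range (r + s)) (hcard : #B = r) :
    ∃ lam, IsRectPartition r s lam ∧ betaSet r lam = B := by
  let f := B.orderEmbOfFin hcard
  have hf : StrictMono f := f.strictMono
  have le_f (k : Fin r) : (k : ℕ) ≤ f k := by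
    have := hf.val_sub_le_sub ⟨0, k.pos⟩ k
    simp only at this
    omega
  have f_le (k : Fin r) : f k ≤ s + k := by
    let last : Fin r := ⟨r - 1, Nat.sub_lt k.pos one_pos⟩
    have hk : k ≤ last := Nat.le_sub_one_of_lt k.isLt
    have := hf.val_sub_le_sub k last
    have := hf.monotone hk
    have : f last < r + s := mem_range.mp (hB (B.orderEmbOfFin_mem hcard last))
    simp only [last] at *
    omega
  have beta_eq (i : Fin r) : f i.rev - (r - 1 - i) + (r - 1 - i) = f i.rev := by
    have := le_f i.rev
    rw [Fin.val_rev] at this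
    omega
  refine ⟨fun i => f i.rev - (r - 1 - i), ⟨fun i j hij => ?_, fun i => ?_⟩, ?_⟩
  · have hrev := Fin.rev_le_rev.mpr hij
    have := hf.val_sub_le_sub j.rev i.rev
    have := hf.monotone hrev
    have := beta_eq i
    have := beta_eq j
    have : (i : ℕ) ≤ j := hij
    have := j.isLt
    rw [Fin.val_rev, Fin.val_rev] at *
    dsimp only
    omega
  · have := f_le i.rev
    have := beta_eq i
    rw [Fin.val_rev] at *
    dsimp only
    omega
  · calc betaSet r (fun i => f i.rev - (r - 1 - i))
        = univ.image (f ∘ Fin.rev) := image_congr fun i _ => beta_eq i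
      _ = B := by
          rw [← image_image, image_univ_of_surjective Fin.rev_surjective,
            image_orderEmbOfFin_univ]

theorem top_mem_betaSet_iff (hp : IsRectPartition r s lam) (hr : 0 < r) :
    r + s - 1 ∈ betaSet r lam ↔ lam ⟨0, hr⟩ = s := by
  constructor
  · intro hb
    obtain ⟨i, -, hi⟩ := mem_image.mp hb
    have := hp.2 i
    rw [show i = ⟨0, hr⟩ from Fin.ext (by simp only; omega)] at hi
    simp only at hi
    omega
  · intro h
    exact mem_image.mpr ⟨⟨0, hr⟩, mem_univ _, by simp only [h]; omega⟩

theorem zero_mem_betaSet_iff (hr : 0 < r) :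
    0 ∈ betaSet r lam ↔ lam ⟨r - 1, Nat.sub_lt hr one_pos⟩ = 0 := by
  constructor
  · intro hb
    obtain ⟨i, -, hi⟩ := mem_image.mp hb
    have := i.isLt
    rw [show i = ⟨r - 1, by omega⟩ from Fin.ext (by simp only; omega)] at hi
    omega
  · intro h
    exact mem_image.mpr ⟨⟨r - 1, Nat.sub_lt hr one_pos⟩, mem_univ _, by simp [h]⟩

end BetaSet

section TCore
variable {r s t : ℕ} {lam : Fin r → ℕ}

theorem IsTCore.betaSet_eq_abacus (hc : IsTCore r t lam) (ht : 0 < t) :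
    betaSet r lam = abacus t (aCount r t lam) :=
  eq_abacus_of_sub_mem ht hc

theorem sum_aCount (h : Antitone lam) (ht : 0 < t) : ∑ i ∈ range t, aCount r t lam i = r := by
  conv_rhs => rw [← card_betaSet h]
  exact (card_eq_sum_card_fiberwise fun b _ => mem_range.mpr (Nat.mod_lt b ht)).symm

theorem IsTCore.aCount_le_nres (hc : IsTCore r t lam) (hp : IsRectPartition r s lam) (ht : 0 < t)
    {i : ℕ} (hi : i < t) : aCount r t lam i ≤ nres r s t i :=
  (abacus_subset_range_iff ht).mp (hc.betaSet_eq_abacus ht ▸ betaSet_subset_range hp) i hi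

theorem nres_mod (ht : 0 < t) (hrs : 0 < r + s) :
    nres r s t ((r + s - 1) % t) = (r + s - 1) / t + 1 := by
  have hdm := Nat.div_add_mod (r + s - 1) t
  have : r + s + t - 1 - (r + s - 1) % t = t * ((r + s - 1) / t + 1) := by
    rw [Nat.mul_succ]; omega
  rw [nres, this, Nat.mul_div_cancel_left _ ht]

theorem IsTCore.lam_zero_eq_iff (hc : IsTCore r t lam) (hp : IsRectPartition r s lam) (ht : 0 < t)
    (hr : 0 < r) {j : ℕ} (hj : (r + s - 1) % t = j) :
    lam ⟨0, hr⟩ = s ↔ aCount r t lam j = nres r s t j := by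
  subst hj
  have := hc.aCount_le_nres hp ht (Nat.mod_lt (r + s - 1) ht)
  rw [← top_mem_betaSet_iff hp hr, hc.betaSet_eq_abacus ht, mem_abacus ht,
    nres_mod ht (by omega)] at *
  omega

theorem IsTCore.one_le_lam_iff (hc : IsTCore r t lam) (ht : 0 < t) (hr : 0 < r) :
    1 ≤ lam ⟨r - 1, Nat.sub_lt hr one_pos⟩ ↔ aCount r t lam 0 = 0 := by
  rw [Nat.one_le_iff_ne_zero, Ne, ← zero_mem_betaSet_iff hr, hc.betaSet_eq_abacus ht, mem_abacus ht,
    Nat.zero_div, Nat.zero_mod, not_lt, Nat.le_zero]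

theorem IsTCore.eq_of_aCount_eq {lam' : Fin r → ℕ} (hc : IsTCore r t lam) (hc' : IsTCore r t lam')
    (h : Antitone lam) (h' : Antitone lam') (ht : 0 < t)
    (heq : ∀ i < t, aCount r t lam i = aCount r t lam' i) : lam = lam' :=
  eq_of_betaSet_eq h h' <| by
    rw [hc.betaSet_eq_abacus ht, hc'.betaSet_eq_abacus ht, abacus_congr heq]

theorem exists_isTCore_aCount_eq {a : ℕ → ℕ} (ht : 0 < t) (ha : ∀ i < t, a i ≤ nres r s t i)
    (hsum : ∑ i ∈ range t, a i = r) :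
    ∃ lam, IsRectPartition r s lam ∧ IsTCore r t lam ∧ ∀ i < t, aCount r t lam i = a i := by
  obtain ⟨lam, hp, hβ⟩ := exists_betaSet_eq ((abacus_subset_range_iff ht).mpr ha)
    (by rw [card_abacus ht, hsum])
  refine ⟨lam, hp, fun b hb htb => ?_, fun i hi => ?_⟩
  · rw [hβ] at hb ⊢
    exact sub_mem_abacus ht hb htb
  · rw [aCount, hβ, card_filter_mod_abacus ht hi]

end TCore

section Counting
variable {r s t : ℕ}

theorem fullTCores_eq_empty (hr : 0 < r) (ht : 0 < t) (hj : (r + s - 1) % t = 0) :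
    {lam : Fin r → ℕ | IsRectPartition r s lam ∧ IsTCore r t lam ∧
      lam ⟨0, hr⟩ = s ∧ 1 ≤ lam ⟨r - 1, Nat.sub_lt hr one_pos⟩} = ∅ := by
  refine Set.eq_empty_of_forall_notMem fun lam ⟨hp, hc, htop, hbot⟩ => ?_
  have h0 := (hc.one_le_lam_iff ht hr).mp hbot
  have := (hc.lam_zero_eq_iff hp ht hr rfl).mp htop
  rw [nres_mod ht (by omega), hj, h0] at this
  exact Nat.succ_ne_zero _ this.symm

theorem exists_fullTCore_aCount_eq (hr : 0 < r) (ht : 0 < t) {j : ℕ}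
    (hj : (r + s - 1) % t = j) (hj0 : j ≠ 0) {f : ∀ i ∈ (Icc 1 (t - 1)).erase j, ℕ}
    (hf : ∀ i hi, f i hi ≤ nres r s t i)
    (hsum : ∑ x ∈ ((Icc 1 (t - 1)).erase j).attach, f x.1 x.2 + nres r s t j = r) :
    ∃ lam, (IsRectPartition r s lam ∧ IsTCore r t lam ∧
      lam ⟨0, hr⟩ = s ∧ 1 ≤ lam ⟨r - 1, Nat.sub_lt hr one_pos⟩) ∧
      ∀ i hi, aCount r t lam i = f i hi := by
  have hjt : j < t := hj ▸ Nat.mod_lt _ ht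
  let a : ℕ → ℕ := fun i =>
    if h : i ∈ (Icc 1 (t - 1)).erase j then f i h else if i = j then nres r s t j else 0
  have haS {i : ℕ} (hi : i ∈ (Icc 1 (t - 1)).erase j) : a i = f i hi := dif_pos hi
  have ha0 : a 0 = 0 := by simp [a, hj0.symm]
  have haj : a j = nres r s t j := by simp [a]
  have hle : ∀ i < t, a i ≤ nres r s t i := by
    intro i hi
    by_cases hiS : i ∈ (Icc 1 (t - 1)).erase j
    · exact haS hiS ▸ hf i hiS
    · simp only [a, dif_neg hiS]
      split_ifs with hij
      · rw [hij]
      · exact Nat.zero_le _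
  have htotal : ∑ i ∈ range t, a i = r := by
    rw [sum_range_eq_add_add_sum_erase hj0 hjt, ha0, haj, ← sum_attach _ a,
      sum_congr rfl fun x _ => haS x.2]
    omega
  obtain ⟨lam, hp, hc, hlam⟩ := exists_isTCore_aCount_eq ht hle htotal
  refine ⟨lam, ⟨hp, hc, ?_, ?_⟩, fun i hi => ?_⟩
  · rw [hc.lam_zero_eq_iff hp ht hr hj, hlam j hjt, haj]
  · rw [hc.one_le_lam_iff ht hr, hlam 0 ht, ha0]
  · rw [hlam i (mem_Icc_one_erase_iff.mp hi).2.2, haS hi]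

theorem ncard_fullTCores_eq (hr : 0 < r) (ht : 0 < t) {j : ℕ} (hj : (r + s - 1) % t = j)
    (hj0 : j ≠ 0) :
    {lam : Fin r → ℕ | IsRectPartition r s lam ∧ IsTCore r t lam ∧
      lam ⟨0, hr⟩ = s ∧ 1 ≤ lam ⟨r - 1, Nat.sub_lt hr one_pos⟩}.ncard =
      #{f ∈ ((Icc 1 (t - 1)).erase j).pi fun i => range (nres r s t i + 1) |
        ∑ x ∈ ((Icc 1 (t - 1)).erase j).attach, (f x.1 x.2 : ℤ) = r - nres r s t j} := by
  set S := (Icc 1 (t - 1)).erase j with hSdef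
  have hjt : j < t := hj ▸ Nat.mod_lt _ ht
  have hsum_iff (f : ∀ i ∈ S, ℕ) : ∑ x ∈ S.attach, (f x.1 x.2 : ℤ) = r - nres r s t j ↔
      ∑ x ∈ S.attach, f x.1 x.2 + nres r s t j = r := by
    rw [← Nat.cast_sum]
    omega
  rw [← Set.ncard_coe_finset]
  refine Set.ncard_congr (fun lam _ i _ => aCount r t lam i) ?_ ?_ ?_
  · rintro lam ⟨hp, hc, htop, hbot⟩
    simp only [coe_filter, mem_pi, mem_range, Set.mem_ofPred_eq, hsum_iff]
    refine ⟨fun i hi => Nat.lt_succ_of_le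
      (hc.aCount_le_nres hp ht (mem_Icc_one_erase_iff.mp hi).2.2), ?_⟩
    have htotal := sum_aCount hp.1 ht
    rw [sum_range_eq_add_add_sum_erase hj0 hjt, (hc.one_le_lam_iff ht hr).mp hbot,
      (hc.lam_zero_eq_iff hp ht hr hj).mp htop, ← hSdef] at htotal
    rw [sum_attach S fun i => aCount r t lam i]
    omega
  · rintro lam lam' ⟨hp, hc, htop, hbot⟩ ⟨hp', hc', htop', hbot'⟩ heq
    refine hc.eq_of_aCount_eq hc' hp.1 hp'.1 ht fun i hi => ?_
    rcases eq_or_ne i 0 with hi0 | hi0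
    · rw [hi0, (hc.one_le_lam_iff ht hr).mp hbot, (hc'.one_le_lam_iff ht hr).mp hbot']
    rcases eq_or_ne i j with hij | hij
    · rw [hij, (hc.lam_zero_eq_iff hp ht hr hj).mp htop,
        (hc'.lam_zero_eq_iff hp' ht hr hj).mp htop']
    · exact congrFun (congrFun heq i) (mem_Icc_one_erase_iff.mpr ⟨hij, hi0, hi⟩)
  · intro f hf
    simp only [coe_filter, mem_pi, mem_range, Set.mem_ofPred_eq, hsum_iff] at hf
    obtain ⟨lam, hlam, haCount⟩ := exists_fullTCore_aCount_eq hr ht hj hj0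
      (fun i hi => Nat.le_of_lt_succ (hf.1 i hi)) hf.2
    exact ⟨lam, hlam, funext fun i => funext (haCount i)⟩

end Counting

/-- The exponent `r - n_j` may be negative, whence Laurent polynomials. -/
theorem ncard_tcores_full_rect (r s t : ℕ) (hr : 1 ≤ r) (ht : 2 ≤ t) :
    ((r + s) % t = 1 →
      {lam : Fin r → ℕ | IsRectPartition r s lam ∧ IsTCore r t lam ∧
        lam ⟨0, by omega⟩ = s ∧ 1 ≤ lam ⟨r - 1, by omega⟩}.ncard = 0) ∧
    ((r + s) % t ≠ 1 →
      ({lam : Fin r → ℕ | IsRectPartition r s lam ∧ IsTCore r t lam ∧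
          lam ⟨0, by omega⟩ = s ∧ 1 ≤ lam ⟨r - 1, by omega⟩}.ncard : ℤ) =
        (∏ i ∈ (Finset.Icc 1 (t - 1)).erase ((r + s - 1) % t),
            ∑ m ∈ Finset.range (nres r s t i + 1), LaurentPolynomial.T (m : ℤ) :
          LaurentPolynomial ℤ).coeff
          ((r : ℤ) - (nres r s t ((r + s - 1) % t) : ℤ))) := by
  have hmod := Nat.sub_one_mod_eq_zero_iff (n := r + s) (by omega) ht
  refine ⟨fun h => ?_, fun h => ?_⟩
  · rw [fullTCores_eq_empty hr (by omega) (hmod.mpr h), Set.ncard_empty]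
  · rw [ncard_fullTCores_eq hr (by omega) rfl (mt hmod.mp h), LaurentPolynomial.coeff_prod_sum_T]
end

section
/- Fix integers r, s ≥ 1 and t ≥ 2. Then the average size of the t-core of a uniformly random partition in Par_{r,s}, namely (1/C(r+s,r)) · Σ_{λ ∈ Par_{r,s}} |core_t(λ)|, equals (rs/((r+s)(r+s−1))) · ( C((r+s) mod t, 2) + ⌊(r+s)/t⌋ · C(t,2) ). -/
open Finset

/-!
The beta-set map is a bijection from `Par_{r,s}` onto the `r`-subsets `B` of `{0, …, n - 1}`,
`n = r + s`, and `|core_t| = Σ J(B) - C(r, 2)` with `Σ J(B) = Σ_i (a_i i + C(a_i, 2) t)`.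
Double counting `j`-subsets gives, for a uniformly random `B`,
`E[C(a_i, j)] = C(n_i, j) C(r, j) / C(n, j)`, where `n_i` is the size of the residue class of `i`
in `{0, …, n - 1}`. Since `{0, …, n - 1}` is its own justification,
`Σ_i (n_i i + C(n_i, 2) t) = C(n, 2)`, and the cases `j = 1, 2` collapse the expectation to
`rs / (n (n - 1)) · Σ_{x < n} (x mod t)`, and this sum is `⌊n/t⌋ C(t, 2) + C(n mod t, 2)`.
-/

theorem sum_powersetCard_choose_card_inter_mul {α : Type*} [DecidableEq α]
    {S T : Finset α} (hTS : T ⊆ S) (r j : ℕ) :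
    (∑ B ∈ S.powersetCard r, (#(B ∩ T)).choose j) * (#S).choose j
      = (#S).choose r * r.choose j * (#T).choose j := by
  rcases lt_or_ge r j with hrj | hjr
  · rw [Nat.choose_eq_zero_of_lt hrj, mul_zero, zero_mul, sum_eq_zero, zero_mul]
    intro B hB
    refine Nat.choose_eq_zero_of_lt (lt_of_le_of_lt ?_ hrj)
    exact (card_le_card inter_subset_left).trans (mem_powersetCard.1 hB).2.le
  have hsum : ∑ B ∈ S.powersetCard r, (#(B ∩ T)).choose j
      = (#T).choose j * (#S - j).choose (r - j) := by
    calc ∑ B ∈ S.powersetCard r, (#(B ∩ T)).choose j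
        = ∑ B ∈ S.powersetCard r, #((T.powersetCard j).bipartiteAbove (· ⊇ ·) B) := by
          refine sum_congr rfl fun B _ => ?_
          rw [← card_powersetCard, bipartiteAbove]
          congr 1
          ext P
          simp only [mem_powersetCard, mem_filter, subset_inter_iff]
          tauto
      _ = ∑ P ∈ T.powersetCard j, #((S.powersetCard r).bipartiteBelow (· ⊇ ·) P) :=
          sum_card_bipartiteAbove_eq_sum_card_bipartiteBelow _
      _ = (#T).choose j * (#S - j).choose (r - j) := by
          rw [← card_powersetCard j T, card_eq_sum_ones, sum_mul, one_mul]
          refine sum_congr rfl fun P hP => ?_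
          obtain ⟨hPT, hPj⟩ := mem_powersetCard.1 hP
          rw [bipartiteBelow, ← hPj]
          exact card_filter_powersetCard_subset P S r (hPT.trans hTS) (hPj ▸ hjr)
  rw [hsum, Nat.choose_mul hjr]
  ring

theorem choose_two_card_le_sum (s : Finset ℕ) : (#s).choose 2 ≤ ∑ x ∈ s, x := by
  have h := sum_range_le_sum (s := s.map Nat.castEmbedding) (c := (0 : ℤ)) (by simp)
  simp only [card_map, sum_map, zero_add, Nat.castEmbedding_apply] at h
  rw [Nat.choose_two_right, ← sum_range_id]
  zify
  exact h

theorem sum_range_mul_add_mod (t q ρ : ℕ) (hρ : ρ ≤ t) :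
    ∑ x ∈ range (t * q + ρ), x % t = q * t.choose 2 + ρ.choose 2 := by
  have sum_range_mod_of_le (m : ℕ) (hm : m ≤ t) : ∑ x ∈ range m, x % t = m.choose 2 := by
    rw [Nat.choose_two_right, ← sum_range_id]
    exact sum_congr rfl fun x hx => Nat.mod_eq_of_lt ((mem_range.1 hx).trans_le hm)
  induction q with
  | zero => rw [mul_zero, zero_add, zero_mul, zero_add, sum_range_mod_of_le ρ hρ]
  | succ q ih =>
    rw [show t * (q + 1) + ρ = t + (t * q + ρ) by ring, sum_range_add]
    simp only [Nat.add_mod_left]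
    rw [ih, sum_range_mod_of_le t le_rfl]
    ring

theorem sum_range_mod (n t : ℕ) :
    ∑ x ∈ range n, x % t = n / t * t.choose 2 + (n % t).choose 2 := by
  rcases Nat.eq_zero_or_pos t with rfl | ht
  · simp [Nat.choose_two_right, sum_range_id]
  conv_lhs => rw [← Nat.div_add_mod n t]
  exact sum_range_mul_add_mod t _ _ (Nat.mod_lt n ht).le

theorem sum_powersetCard_choose_card_filter {α : Type*} [DecidableEq α] (S : Finset α)
    (p : α → Prop) [DecidablePred p] (r : ℕ) {j : ℕ} (hj : j ≤ #S) :
    ((∑ B ∈ S.powersetCard r, (#{x ∈ B | p x}).choose j : ℕ) : ℚ)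
      = (#S).choose r * r.choose j / (#S).choose j * (#{x ∈ S | p x}).choose j := by
  have hfilter : ∀ B ∈ S.powersetCard r, {x ∈ B | p x} = B ∩ {x ∈ S | p x} := by
    intro B hB
    rw [inter_filter, inter_eq_left.2 (mem_powersetCard.1 hB).1]
  have hS : ((#S).choose j : ℚ) ≠ 0 := by exact_mod_cast (Nat.choose_pos hj).ne'
  rw [sum_congr rfl fun B hB => by rw [hfilter B hB], div_mul_eq_mul_div, eq_div_iff hS]
  exact_mod_cast sum_powersetCard_choose_card_inter_mul (filter_subset p S) r j

def justify (t : ℕ) (B : Finset ℕ) : Finset ℕ :=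
  (range t).biUnion fun i => (range #{b ∈ B | b % t = i}).image fun m => i + m * t

theorem justification_eq_justify (r t : ℕ) (lam : Fin r → ℕ) :
    justification r t lam = justify t (betaSet r lam) := rfl

theorem add_mul_injective {t : ℕ} (ht : 0 < t) (i : ℕ) :
    Function.Injective fun m => i + m * t :=
  fun _ _ h => Nat.eq_of_mul_eq_mul_right ht (Nat.add_left_cancel h)

theorem sum_range_add_mul (t i a : ℕ) :
    ∑ m ∈ range a, (i + m * t) = a * i + a.choose 2 * t := by
  rw [sum_add_distrib, sum_const, card_range, smul_eq_mul, ← sum_mul, sum_range_id,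
    Nat.choose_two_right]

theorem pairwiseDisjoint_justify (t : ℕ) (B : Finset ℕ) :
    (range t : Set ℕ).PairwiseDisjoint
      fun i => (range #{b ∈ B | b % t = i}).image fun m => i + m * t := by
  intro i hi j hj hij
  simp only [Function.onFun, disjoint_left, mem_image]
  rintro _ ⟨m, -, rfl⟩ ⟨m', -, h⟩
  apply hij
  have := congrArg (· % t) h
  simpa [Nat.add_mul_mod_self_right, Nat.mod_eq_of_lt (mem_range.1 hi),
    Nat.mod_eq_of_lt (mem_range.1 hj)] using this.symm

theorem sum_justify {t : ℕ} (ht : 0 < t) (B : Finset ℕ) :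
    ∑ b ∈ justify t B, b
      = ∑ i ∈ range t,
          (#{b ∈ B | b % t = i} * i + (#{b ∈ B | b % t = i}).choose 2 * t) := by
  rw [justify, sum_biUnion (pairwiseDisjoint_justify t B)]
  refine sum_congr rfl fun i _ => ?_
  rw [sum_image fun _ _ _ _ h => add_mul_injective ht i h, sum_range_add_mul]

theorem card_justify {t : ℕ} (ht : 0 < t) (B : Finset ℕ) : #(justify t B) = #B := by
  rw [justify, card_biUnion (pairwiseDisjoint_justify t B)]
  simp_rw [card_image_of_injective _ (add_mul_injective ht _), card_range]
  exact (card_eq_sum_card_fiberwise fun x _ => mem_range.2 (Nat.mod_lt x ht)).symm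

theorem justify_range {t : ℕ} (ht : 0 < t) (n : ℕ) : justify t (range n) = range n := by
  refine eq_of_subset_of_card_le ?_ (card_justify ht _).ge
  intro x hx
  simp only [justify, mem_biUnion, mem_image, mem_range] at hx
  obtain ⟨i, hi, m, hm, rfl⟩ := hx
  by_contra! hn
  rw [mem_range, not_lt] at hn
  refine hm.not_ge (card_le_card_of_injOn (· / t) ?_ ?_ |>.trans (card_range m).le)
  · intro y hy
    simp only [coe_filter, mem_range, Set.mem_ofPred_eq, coe_range, Set.mem_Iio] at hy ⊢
    have := Nat.mod_add_div y t
    refine Nat.lt_of_mul_lt_mul_left (a := t) ?_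
    linarith
  · intro y hy z hz h
    simp only [coe_filter, mem_range, Set.mem_ofPred_eq] at hy hz
    rw [← Nat.mod_add_div y t, ← Nat.mod_add_div z t, hy.2, hz.2]
    exact congrArg _ (congrArg _ h)

theorem sum_card_filter_mod_mul {t : ℕ} (ht : 0 < t) (s : Finset ℕ) :
    ∑ i ∈ range t, #{x ∈ s | x % t = i} * i = ∑ x ∈ s, x % t := by
  calc _ = ∑ i ∈ range t, ∑ x ∈ s with x % t = i, i := by simp_rw [sum_const, smul_eq_mul]
    _ = _ := sum_fiberwise_of_maps_to' (fun x _ => mem_range.2 (Nat.mod_lt x ht)) id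

theorem sum_powersetCard_sum_justify {t : ℕ} (ht : 0 < t) (S : Finset ℕ) (r : ℕ) :
    ∑ B ∈ S.powersetCard r, ∑ b ∈ justify t B, b
      = ∑ i ∈ range t, ((∑ B ∈ S.powersetCard r, #{b ∈ B | b % t = i}) * i
          + (∑ B ∈ S.powersetCard r, (#{b ∈ B | b % t = i}).choose 2) * t) := by
  simp_rw [sum_justify ht]
  rw [sum_comm]
  simp_rw [sum_add_distrib, sum_mul]

theorem sum_powersetCard_sum_justify_sub {t : ℕ} (ht : 0 < t) {n : ℕ} (hn : 2 ≤ n) (r : ℕ) :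
    ∑ B ∈ (range n).powersetCard r, ((∑ b ∈ justify t B, b : ℕ) - (r.choose 2 : ℚ))
      = n.choose r * (r * (n - r) / (n * (n - 1))) * ∑ x ∈ range n, x % t := by
  have hfirst := fun i => sum_powersetCard_choose_card_filter (range n) (· % t = i) r
    (j := 1) (by rw [card_range]; omega)
  have hsecond := fun i => sum_powersetCard_choose_card_filter (range n) (· % t = i) r
    (j := 2) (by rw [card_range]; omega)
  simp only [card_range, Nat.choose_one_right] at hfirst hsecond
  have hclasses : ∑ x ∈ range n, x % t
      + ∑ i ∈ range t, (#{x ∈ range n | x % t = i}).choose 2 * t = n.choose 2 := by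
    rw [← sum_card_filter_mod_mul ht, ← sum_add_distrib, ← sum_justify ht, justify_range ht,
      sum_range_id, Nat.choose_two_right]
  have hclasses_cast := congrArg (Nat.cast (R := ℚ)) hclasses
  rw [Nat.cast_add] at hclasses_cast
  have hn0 : (n : ℚ) ≠ 0 := by positivity
  have hn1 : (n : ℚ) - 1 ≠ 0 := by
    rw [sub_ne_zero]
    exact_mod_cast (by omega : n ≠ 1)
  calc ∑ B ∈ (range n).powersetCard r, ((∑ b ∈ justify t B, b : ℕ) - (r.choose 2 : ℚ))
      = n.choose r * r / n * ∑ i ∈ range t, (#{x ∈ range n | x % t = i} * i : ℕ)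
        + n.choose r * r.choose 2 / n.choose 2
          * ∑ i ∈ range t, ((#{x ∈ range n | x % t = i}).choose 2 * t : ℕ)
        - n.choose r * r.choose 2 := by
        rw [sum_sub_distrib, sum_const, card_powersetCard, card_range, nsmul_eq_mul,
          ← Nat.cast_sum, sum_powersetCard_sum_justify ht, Nat.cast_sum, Nat.cast_sum,
          Nat.cast_sum, mul_sum, mul_sum, ← sum_add_distrib]
        congr 1
        refine sum_congr rfl fun i _ => ?_
        push_cast [hfirst i, hsecond i]
        ring
    _ = _ := by
        rw [sum_card_filter_mod_mul ht, eq_sub_of_add_eq' hclasses_cast, Nat.cast_choose_two,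
          Nat.cast_choose_two]
        field_simp
        ring

theorem StrictMono.fin_apply_add_sub_le {r : ℕ} {f : Fin r → ℕ} (hf : StrictMono f)
    {k j : Fin r} (hkj : k ≤ j) : f k + (j - k) ≤ f j := by
  have h := card_le_card_of_injOn f (s := Icc k j) (t := Icc (f k) (f j))
    (fun x hx => by
      rw [coe_Icc, Set.mem_Icc] at hx
      simpa using ⟨hf.monotone hx.1, hf.monotone hx.2⟩)
    hf.injective.injOn
  rw [Fin.card_Icc, Nat.card_Icc] at h
  omega

theorem betaSet_eq_image_rev (r : ℕ) (lam : Fin r → ℕ) :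
    betaSet r lam = univ.image fun k : Fin r => lam k.rev + k := by
  have h : (fun i : Fin r => lam i + (r - 1 - i))
      = (fun k : Fin r => lam k.rev + k) ∘ Fin.rev := by
    funext i
    simp only [Function.comp, Fin.rev_rev, Fin.val_rev]
    omega
  rw [betaSet, h, ← image_image, image_univ_of_surjective Fin.rev_surjective]

theorem strictMono_rev_add_of_antitone {r : ℕ} {lam : Fin r → ℕ} (h : Antitone lam) :
    StrictMono fun k : Fin r => lam k.rev + k := fun k j hkj => by
  have := h (Fin.rev_le_rev.2 hkj.le)
  simp only
  omega

theorem card_betaSet_of_antitone {r : ℕ} {lam : Fin r → ℕ} (h : Antitone lam) :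
    #(betaSet r lam) = r := by
  rw [betaSet_eq_image_rev, card_image_of_injective _ (strictMono_rev_add_of_antitone h).injective,
    card_univ, Fintype.card_fin]

theorem betaSet_injOn (r : ℕ) : Set.InjOn (betaSet r) {lam | Antitone lam} := by
  intro lam₁ h₁ lam₂ h₂ h
  have hrange :=
    (strictMono_rev_add_of_antitone h₁).range_inj (strictMono_rev_add_of_antitone h₂)
  have := hrange.1 <| by
    simpa [betaSet_eq_image_rev] using congrArg ((↑) : Finset ℕ → Set ℕ) h
  funext i
  simpa using congrFun this i.rev

theorem exists_isRectPartition_betaSet_eq {r s : ℕ} {B : Finset ℕ} (hB : B ⊆ range (r + s))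
    (hcard : #B = r) : ∃ lam, IsRectPartition r s lam ∧ betaSet r lam = B := by
  set e := B.orderEmbOfFin hcard
  have hgap := @e.strictMono.fin_apply_add_sub_le
  have hmem (k : Fin r) : e k < r + s := mem_range.1 (hB (B.orderEmbOfFin_mem hcard k))
  have hle (k : Fin r) : (k : ℕ) ≤ e k := by
    have := hgap (k := ⟨0, k.pos⟩) (j := k) (Nat.zero_le _)
    simp only at this
    omega
  have hlt (k : Fin r) : e k + (r - 1 - k) < r + s := by
    have hk := k.isLt
    have hk_last := hgap (j := ⟨r - 1, by omega⟩) (Fin.le_def.2 (Nat.le_sub_one_of_lt hk))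
    have := hmem ⟨r - 1, by omega⟩
    simp only at hk_last
    omega
  refine ⟨fun i => e i.rev - i.rev, ⟨fun i j hij => ?_, fun i => ?_⟩, ?_⟩
  · have := hgap (Fin.rev_le_rev.2 hij)
    have := hle j.rev
    simp only
    omega
  · have := hlt i.rev
    simp only [Fin.val_rev] at *
    omega
  · rw [betaSet_eq_image_rev]
    conv_rhs => rw [← image_orderEmbOfFin_univ B hcard]
    refine image_congr fun k _ => ?_
    simp only [Fin.rev_rev]
    exact Nat.sub_add_cancel (hle k)

theorem bijOn_betaSet (r s : ℕ) :
    Set.BijOn (betaSet r) {lam | IsRectPartition r s lam} ((range (r + s)).powersetCard r) := by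
  refine ⟨fun lam h => ?_, (betaSet_injOn r).mono fun lam h => h.1, fun B hB => ?_⟩
  · refine mem_powersetCard.2 ⟨fun b hb => ?_, card_betaSet_of_antitone h.1⟩
    obtain ⟨i, -, rfl⟩ := mem_image.1 hb
    have := h.2 i
    have := i.isLt
    exact mem_range.2 (by omega)
  · obtain ⟨hsub, hcard⟩ := mem_powersetCard.1 hB
    exact exists_isRectPartition_betaSet_eq hsub hcard

theorem cast_coreSize {r t : ℕ} (ht : 0 < t) {lam : Fin r → ℕ} (h : Antitone lam) :
    (coreSize r t lam : ℚ) = (∑ b ∈ justify t (betaSet r lam), b : ℕ) - r.choose 2 := by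
  have hcard : #(justify t (betaSet r lam)) = r := by
    rw [card_justify ht, card_betaSet_of_antitone h]
  rw [coreSize, ← Nat.choose_two_right, justification_eq_justify, Nat.cast_sub]
  simpa only [hcard] using choose_two_card_le_sum (justify t (betaSet r lam))

/-- The average size of the `t`-core of a uniformly random partition in
`Par_{r,s}` equals `(rs/((r+s)(r+s−1))) (C((r+s) mod t, 2) + ⌊(r+s)/t⌋ C(t,2))`. -/
theorem expected_core_size (r s t : ℕ) (hr : 1 ≤ r) (hs : 1 ≤ s) (ht : 2 ≤ t) :
    (1 / ((r + s).choose r : ℚ)) *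
        ∑ᶠ lam ∈ {lam : Fin r → ℕ | IsRectPartition r s lam}, (coreSize r t lam : ℚ) =
      ((r : ℚ) * (s : ℚ) / (((r : ℚ) + (s : ℚ)) * ((r : ℚ) + (s : ℚ) - 1))) *
        ((((r + s) % t).choose 2 : ℚ) + ((r + s) / t : ℕ) * (t.choose 2 : ℚ)) := by
  have ht0 : 0 < t := by omega
  rw [finsum_mem_eq_of_bijOn (betaSet r) (bijOn_betaSet r s)
      (g := fun B => ((∑ b ∈ justify t B, b : ℕ) : ℚ) - r.choose 2)
      fun lam h => cast_coreSize ht0 h.1,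
    finsum_mem_coe_finset, sum_powersetCard_sum_justify_sub ht0 (by omega), sum_range_mod]
  have hN : ((r + s).choose r : ℚ) ≠ 0 := by
    exact_mod_cast (Nat.choose_pos (Nat.le_add_right r s)).ne'
  push_cast
  field_simp
  ring
end
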